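/- arXiv:2211.09600 — 4 statements merged into one kernel-verified Lean document; each statement's English description precedes it below -/
import Mathlib

section
/- Let L be an even hyperbolic lattice and e ∈ L a primitive isotropic vector with n = gcd{e.x : x ∈ L}. Then there exists f ∈ L with e.f = n such that the sublattice H = ⟨e,f⟩ is primitive in L, i.e. L/H is torsion-free. -/
/-!
Any `f` with `e.f = n` works. If `m • x = a • e + b • f`, pairing with `e` gives `b * n = m * e.x`,
and `n ∣ e.x` makes `m ∣ b`; then `m • (x - k • f) = a • e`, and primitivity of `e` in the
torsion-free module `L` forces `m ∣ a` (Bézout applied to `m / gcd m a` and `a / gcd m a`).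
-/

section
variable {R M : Type*} [CommRing R] [IsDomain R] [IsBezout R] [AddCommGroup M] [Module R M]
  [Module.IsTorsionFree R M] {e : M}

theorem dvd_of_smul_eq_smul_of_primitive (he : ∀ (m : R) (u : M), e = m • u → IsUnit m)
    {m a : R} {y : M} (hm : m ≠ 0) (h : m • y = a • e) : m ∣ a := by
  classical
  let := IsBezout.toGCDDomain R
  obtain ⟨m', a', hm', ha', hcop⟩ := extract_gcd m a
  obtain ⟨u, v, huv⟩ := (gcd_isUnit_iff m' a').mp hcop
  have hg : gcd m a ≠ 0 := fun h0 => hm ((gcd_eq_zero_iff m a).mp h0).1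
  have hy : m' • y = a' • e := smul_right_injective M hg <| by
    simp only [smul_smul, ← hm', ← ha', h]
  have hunit : IsUnit m' := he m' (u • e + v • y) <| by
    rw [smul_add, smul_smul, smul_comm m' v, hy, smul_smul, ← add_smul, mul_comm m', huv,
      one_smul]
  calc m = gcd m a * m' := hm'
    _ ∣ gcd m a * a' := mul_dvd_mul_left _ hunit.dvd
    _ = a := ha'.symm

theorem mem_span_pair_of_smul_mem_span_pair (he : ∀ (m : R) (u : M), e = m • u → IsUnit m)
    (B : M →ₗ[R] M →ₗ[R] R) (he0 : B e e = 0) {n : R} (hn : n ≠ 0)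
    (hdvd : ∀ x : M, n ∣ B e x) {f : M} (hf : B e f = n) {x : M} {m : R} (hm : m ≠ 0)
    (hmx : m • x ∈ Submodule.span R {e, f}) : x ∈ Submodule.span R {e, f} := by
  obtain ⟨a, b, hab⟩ := Submodule.mem_span_pair.mp hmx
  obtain ⟨k, hk⟩ := hdvd x
  have hb : b = m * k := mul_right_cancel₀ hn <| by
    have := congr_arg (B e) hab
    simp only [map_add, map_smul, smul_eq_mul, he0, hf, hk] at this
    linear_combination this
  have hme : m • (x - k • f) = a • e := by
    rw [smul_sub, smul_smul, ← hb, ← hab, add_sub_cancel_right]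
  obtain ⟨q, rfl⟩ := dvd_of_smul_eq_smul_of_primitive he hm hme
  have hx : x - k • f = q • e := smul_right_injective M hm <| by simp only [hme, mul_smul]
  exact Submodule.mem_span_pair.mpr ⟨q, k, by rw [← hx, sub_add_cancel]⟩
end

theorem stmt0_general (L : Type*) [AddCommGroup L] [Module ℤ L]
    [Module.Free ℤ L]
    (B : L →ₗ[ℤ] L →ₗ[ℤ] ℤ)
    (e : L) (he0 : B e e = 0)
    (heprim : ∀ (m : ℤ) (u : L), e = m • u → IsUnit m)
    (n : ℤ) (hn : 0 < n)
    (hdvd : ∀ x : L, n ∣ B e x)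
    (hex : ∃ x : L, B e x = n) :
    ∃ f : L, B e f = n ∧
      ∀ (x : L) (m : ℤ), m ≠ 0 → m • x ∈ Submodule.span ℤ ({e, f} : Set L) →
        x ∈ Submodule.span ℤ ({e, f} : Set L) := by
  -- `m • x` in the statement is `zsmul`; the given `ℤ`-module structure is the same one
  obtain rfl : ‹Module ℤ L› = AddCommGroup.toIntModule L := Subsingleton.elim _ _
  obtain ⟨f, hf⟩ := hex
  exact ⟨f, hf, fun x m hm hmx =>
    mem_span_pair_of_smul_mem_span_pair heprim B he0 hn.ne' hdvd hf hm hmx⟩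

/-- In an even hyperbolic lattice `L`, given a primitive isotropic vector `e`
with `n = gcd {B e x : x ∈ L}`, there exists `f ∈ L` with `B e f = n` such that the
sublattice `H = span {e, f}` is primitive in `L`, i.e. `L / H` is torsion-free. -/
theorem stmt0 (L : Type*) [AddCommGroup L] [Module ℤ L]
    [Module.Free ℤ L] [Module.Finite ℤ L]
    (B : L →ₗ[ℤ] L →ₗ[ℤ] ℤ)
    (hsym : ∀ x y : L, B x y = B y x)
    (heven : ∀ x : L, ∃ c : ℤ, B x x = 2 * c)
    (hnondeg : ∀ x : L, (∀ y : L, B x y = 0) → x = 0)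
    (hhyp : ∃ v : L, 0 < B v v ∧ ∀ x : L, B v x = 0 → x ≠ 0 → B x x < 0)
    (e : L) (he0 : B e e = 0)
    (heprim : ∀ (m : ℤ) (u : L), e = m • u → IsUnit m)
    (n : ℤ) (hn : 0 < n)
    (hdvd : ∀ x : L, n ∣ B e x)
    (hex : ∃ x : L, B e x = n) :
    ∃ f : L, B e f = n ∧
      ∀ (x : L) (m : ℤ), m ≠ 0 → m • x ∈ Submodule.span ℤ ({e, f} : Set L) →
        x ∈ Submodule.span ℤ ({e, f} : Set L) :=
  stmt0_general L B e he0 heprim n hn hdvd hex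
end

section
/- Let L be an even hyperbolic lattice with infinitely many simple (−2)-roots, and suppose there is a cusp e of 𝒟_L with e.r ≤ N for all simple (−2)-roots r and for some constant N. Then every g ∈ Aut(𝒟_L) fixes e. -/
/-!
A vector of positive square in a hyperbolic lattice has a negative definite orthogonal
complement, and Cauchy–Schwarz there shows that only finitely many `(−2)`-roots have bounded
pairing with it. If `g` swapped the two halves of the positive cone, every positive root would
separate `x₀` from `-g x₀`, which bounds its pairing with `x₀`; so `g` preserves `𝒟_L` and
permutes the simple roots. Then `e + g e` pairs with every simple root between `0` and `2N`, so
it cannot have positive square: `e` and `g e` are orthogonal isotropic vectors in the same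
half-cone, hence proportional, and equal since both are primitive.
-/

section ChamberMachinery

variable {L : Type*} [AddCommGroup L] [Module ℤ L]

/-- An isometry of the lattice `(L, B)`. -/
def IsIsometry (B : L →ₗ[ℤ] L →ₗ[ℤ] ℤ) (g : L ≃ₗ[ℤ] L) : Prop :=
  ∀ x y : L, B (g x) (g y) = B x y

/-- `x₀` is a point of the positive cone lying on no mirror of a `(−2)`-root; it
determines a fundamental chamber `𝒟_L` for the Weyl group. -/
def GenericPoint (B : L →ₗ[ℤ] L →ₗ[ℤ] ℤ) (x₀ : L) : Prop :=
  0 < B x₀ x₀ ∧ ∀ r : L, B r r = -2 → B x₀ r ≠ 0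

/-- The `(−2)`-roots that are positive with respect to the chamber determined by `x₀`. -/
def PosRoots (B : L →ₗ[ℤ] L →ₗ[ℤ] ℤ) (x₀ : L) : Set L :=
  {r : L | B r r = -2 ∧ 0 < B x₀ r}

/-- A vector is fundamental if it lies in the (closure of the) fundamental chamber
`𝒟_L` determined by `x₀`, i.e. it lies in the closure of the positive cone and pairs
nonnegatively with all positive `(−2)`-roots. -/
def IsFund (B : L →ₗ[ℤ] L →ₗ[ℤ] ℤ) (x₀ : L) (v : L) : Prop :=
  0 ≤ B v v ∧ 0 ≤ B v x₀ ∧ ∀ r ∈ PosRoots B x₀, 0 ≤ B v r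

/-- A nonzero vector is positive if it has nonnegative inner product with all
fundamental vectors. -/
def IsPosVec (B : L →ₗ[ℤ] L →ₗ[ℤ] ℤ) (x₀ : L) (v : L) : Prop :=
  v ≠ 0 ∧ ∀ u : L, IsFund B x₀ u → 0 ≤ B v u

/-- A positive `(−2)`-root `r` is simple if `r − r'` is not positive for any other
positive `(−2)`-root `r'`. -/
def IsSimpleRoot (B : L →ₗ[ℤ] L →ₗ[ℤ] ℤ) (x₀ : L) (r : L) : Prop :=
  r ∈ PosRoots B x₀ ∧ ∀ r' ∈ PosRoots B x₀, r' ≠ r → ¬ IsPosVec B x₀ (r - r')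

/-- A primitive vector of a lattice. -/
def IsPrimitiveVec (v : L) : Prop := ∀ (m : ℤ) (u : L), v = m • u → IsUnit m

/-- A cusp of the fundamental domain: a primitive isotropic vector in `L ∩ 𝒟_L`. -/
def IsChamberCusp (B : L →ₗ[ℤ] L →ₗ[ℤ] ℤ) (x₀ : L) (e : L) : Prop :=
  B e e = 0 ∧ IsPrimitiveVec e ∧ IsFund B x₀ e

end ChamberMachinery

section PrimitiveVectors

variable {M : Type*} [AddCommGroup M]

lemma IsPrimitiveVec.ne_zero {v : M} (hv : IsPrimitiveVec v) : v ≠ 0 := by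
  rintro rfl
  exact not_isUnit_zero (hv 0 0 (zero_smul ℤ 0).symm)

variable [IsAddTorsionFree M]

lemma IsPrimitiveVec.dvd_of_smul_eq_smul {v w : M} (hv : IsPrimitiveVec v) {m n : ℤ}
    (h : m • v = n • w) : n ∣ m := by
  set d : ℤ := (Int.gcd m n : ℤ)
  obtain ⟨n', hn'⟩ : d ∣ n := Int.gcd_dvd_right m n
  rcases eq_or_ne d 0 with hd | hd
  · obtain ⟨rfl, rfl⟩ : m = 0 ∧ n = 0 := Int.gcd_eq_zero_iff.mp (by omega)
    exact dvd_rfl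
  -- Bezout: `d • v = n • (gcdA • w + gcdB • v)`, so `v` is divisible by `n / d`.
  have hdv : d • v = d • (n' • (Int.gcdA m n • w + Int.gcdB m n • v)) := by
    calc d • v = (m * Int.gcdA m n + n * Int.gcdB m n) • v := by rw [← Int.gcd_eq_gcd_ab]
      _ = n • (Int.gcdA m n • w + Int.gcdB m n • v) := by
        rw [add_zsmul, mul_comm m, mul_zsmul, h, smul_add, mul_zsmul, smul_comm]
      _ = d • (n' • (Int.gcdA m n • w + Int.gcdB m n • v)) := by rw [hn', mul_zsmul]
  rcases Int.isUnit_iff.mp (hv n' _ (zsmul_right_injective hd hdv)) with rfl | rfl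
  · exact hn' ▸ (mul_one d).symm ▸ Int.gcd_dvd_left m n
  · exact hn' ▸ (mul_neg_one d).symm ▸ (neg_dvd.mpr (Int.gcd_dvd_left m n))

lemma IsPrimitiveVec.eq_of_smul_eq_smul {v w : M} (hv : IsPrimitiveVec v)
    (hw : IsPrimitiveVec w) {m n : ℤ} (hm : 0 < m) (hn : 0 < n) (h : m • v = n • w) :
    v = w := by
  obtain rfl : m = n := Int.dvd_antisymm hm.le hn.le
    (hw.dvd_of_smul_eq_smul h.symm) (hv.dvd_of_smul_eq_smul h)
  exact zsmul_right_injective hm.ne' h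

end PrimitiveVectors

section LorentzianForms

variable {L : Type*} [AddCommGroup L] [Module ℤ L] {B : L →ₗ[ℤ] L →ₗ[ℤ] ℤ}

-- Together with a vector of positive square, this says that `B` has signature `(1, n)`.
def IsLorentzian (B : L →ₗ[ℤ] L →ₗ[ℤ] ℤ) : Prop :=
  ∀ a x : L, 0 < B a a → B a x = 0 → x ≠ 0 → B x x < 0

lemma apply_smul_sub_smul (c d : ℤ) (x y z : L) :
    B (c • x - d • y) z = c * B x z - d * B y z := by
  simp only [map_sub, map_zsmul, LinearMap.sub_apply, LinearMap.smul_apply, smul_eq_mul]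

lemma apply_apply_smul_sub_smul (c d : ℤ) (x y z : L) :
    B z (c • x - d • y) = c * B z x - d * B z y := by
  simp only [map_sub, map_zsmul, smul_eq_mul]

lemma apply_smul_sub_smul_self (hsym : ∀ x y : L, B x y = B y x) (c d : ℤ) (x y : L) :
    B (c • x - d • y) (c • x - d • y) = c ^ 2 * B x x - 2 * c * d * B x y + d ^ 2 * B y y := by
  simp only [apply_smul_sub_smul, apply_apply_smul_sub_smul, hsym y x]
  ring

lemma apply_smul_sub_smul_apply_smul_sub_smul (hsym : ∀ x y : L, B x y = B y x)
    (c d c' d' : ℤ) (x y a : L) :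
    B (c • x - d • a) (c' • y - d' • a)
      = c * c' * B x y - c * d' * B a x - d * c' * B a y + d * d' * B a a := by
  simp only [apply_smul_sub_smul, apply_apply_smul_sub_smul, hsym x a]
  ring

lemma isLorentzian_of_exists (hsym : ∀ x y : L, B x y = B y x)
    (h : ∃ v : L, 0 < B v v ∧ ∀ x : L, B v x = 0 → x ≠ 0 → B x x < 0) : IsLorentzian B := by
  obtain ⟨v, hv, hvneg⟩ := h
  intro a x ha hax hx
  by_cases hvx : B v x = 0
  · exact hvneg x hvx hx
  -- `w` lies in `v^⊥`, and `B w w = (B v a)² B x x + (B v x)² B a a` because `x ⊥ a`.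
  set w := B v a • x - B v x • a
  have hvw : B v w = 0 := by
    simp only [w, apply_apply_smul_sub_smul]
    ring
  have hww : B w w ≤ 0 := by
    rcases eq_or_ne w 0 with h0 | h0
    · simp [h0]
    · exact (hvneg w hvw h0).le
  rw [apply_smul_sub_smul_self hsym, hsym x a, hax] at hww
  have : 0 < B v x ^ 2 * B a a := by positivity
  by_contra! hxx
  nlinarith [mul_nonneg (sq_nonneg (B v a)) hxx]

namespace IsLorentzian

lemma sq_nonpos_of_orth (hB : IsLorentzian B) {a x : L} (ha : 0 < B a a) (hax : B a x = 0) :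
    B x x ≤ 0 := by
  rcases eq_or_ne x 0 with rfl | hx
  · simp
  · exact (hB a x ha hax hx).le

lemma sq_apply_le_of_orth (hB : IsLorentzian B) (hsym : ∀ x y : L, B x y = B y x) {a x y : L}
    (ha : 0 < B a a) (hx : B a x = 0) (hy : B a y = 0) : B x y ^ 2 ≤ B x x * B y y := by
  rcases eq_or_ne y 0 with rfl | hy0
  · simp
  have hyy := hB a y ha hy hy0
  have hw : B a (B y y • x - B x y • y) = 0 := by
    simp only [apply_apply_smul_sub_smul, hx, hy]
    ring
  have hww := hB.sq_nonpos_of_orth ha hw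
  rw [apply_smul_sub_smul_self hsym] at hww
  nlinarith

/-- Cauchy–Schwarz for the components of `x` and `y` orthogonal to `a`, scaled by `B a a`. -/
lemma sq_reduced_le (hB : IsLorentzian B) (hsym : ∀ x y : L, B x y = B y x) {a : L}
    (ha : 0 < B a a) (x y : L) :
    (B a a * B x y - B a x * B a y) ^ 2
      ≤ (B a a * B x x - B a x ^ 2) * (B a a * B y y - B a y ^ 2) := by
  have hproj (z : L) : B a (B a a • z - B a z • a) = 0 := by
    simp only [apply_apply_smul_sub_smul]
    ring
  have h := hB.sq_apply_le_of_orth hsym ha (hproj x) (hproj y)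
  simp only [apply_smul_sub_smul_apply_smul_sub_smul hsym] at h
  have h' : B a a ^ 2 * (B a a * B x y - B a x * B a y) ^ 2
      ≤ B a a ^ 2 * ((B a a * B x x - B a x ^ 2) * (B a a * B y y - B a y ^ 2)) := by
    convert h using 1 <;> ring
  exact le_of_mul_le_mul_left h' (pow_pos ha 2)

lemma reduced_self_nonpos (hB : IsLorentzian B) (hsym : ∀ x y : L, B x y = B y x) {a : L}
    (ha : 0 < B a a) (x : L) : B a a * B x x - B a x ^ 2 ≤ 0 := by
  have hproj : B a (B a a • x - B a x • a) = 0 := by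
    simp only [apply_apply_smul_sub_smul]
    ring
  have h := hB.sq_nonpos_of_orth ha hproj
  rw [apply_smul_sub_smul_self hsym, hsym x a] at h
  nlinarith

lemma apply_pos_of_cone (hB : IsLorentzian B) {a v : L} (ha : 0 < B a a) (hv : 0 ≤ B v v)
    (hav : 0 ≤ B a v) (hv0 : v ≠ 0) : 0 < B a v :=
  hav.lt_of_ne fun h => (hB a v ha h.symm hv0).not_ge hv

lemma apply_nonneg_of_cone (hB : IsLorentzian B) (hsym : ∀ x y : L, B x y = B y x)
    {a x y : L} (ha : 0 < B a a) (hx : 0 ≤ B x x) (hy : 0 ≤ B y y) (hax : 0 ≤ B a x)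
    (hay : 0 ≤ B a y) : 0 ≤ B x y := by
  rcases eq_or_ne x 0 with rfl | hx0
  · simp
  rcases eq_or_ne y 0 with rfl | hy0
  · simp
  have hax' := hB.apply_pos_of_cone ha hx hax hx0
  have hay' := hB.apply_pos_of_cone ha hy hay hy0
  have hw : B a (B a y • x - B a x • y) = 0 := by
    simp only [apply_apply_smul_sub_smul]
    ring
  have hww := hB.sq_nonpos_of_orth ha hw
  rw [apply_smul_sub_smul_self hsym] at hww
  have h : 0 ≤ (2 * B a y * B a x) * B x y := by
    nlinarith [mul_nonneg (sq_nonneg (B a y)) hx, mul_nonneg (sq_nonneg (B a x)) hy]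
  exact nonneg_of_mul_nonneg_right h (by positivity)

lemma smul_eq_smul_of_apply_eq_zero (hB : IsLorentzian B) (hsym : ∀ x y : L, B x y = B y x)
    {a x y : L} (ha : 0 < B a a) (hx : 0 ≤ B x x) (hy : 0 ≤ B y y) (hxy : B x y = 0) :
    B a y • x = B a x • y := by
  by_contra hne
  have hw : B a (B a y • x - B a x • y) = 0 := by
    simp only [apply_apply_smul_sub_smul]
    ring
  have hww := hB a _ ha hw (sub_ne_zero.mpr hne)
  rw [apply_smul_sub_smul_self hsym, hxy] at hww
  nlinarith [mul_nonneg (sq_nonneg (B a y)) hx, mul_nonneg (sq_nonneg (B a x)) hy]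

lemma apply_le_of_separates (hB : IsLorentzian B) (hsym : ∀ x y : L, B x y = B y x)
    {a b r : L} (ha : 0 < B a a) (hb : 0 < B b b) (hab : 0 ≤ B a b) (hr : B r r = -2)
    (har : 0 ≤ B a r) (hbr : B b r ≤ 0) : B a r ≤ 2 * B a b := by
  have h := hB.sq_reduced_le hsym ha b r
  rw [hr] at h
  have hsq : B a a * (B b b * B a r ^ 2) ≤ B a a * (2 * B a b ^ 2) := by
    nlinarith [mul_nonneg ha.le (mul_nonneg ha.le (sq_nonneg (B b r))),
      mul_nonneg ha.le (mul_nonneg hab (mul_nonneg har (neg_nonneg.mpr hbr))),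
      mul_pos (mul_pos ha ha) hb]
  have hsq' : B a r ^ 2 ≤ 2 * B a b ^ 2 := by
    nlinarith [le_of_mul_le_mul_left hsq ha, mul_nonneg (sq_nonneg (B a r)) (sub_nonneg.mpr hb)]
  nlinarith

lemma abs_apply_le_of_root (hB : IsLorentzian B) (hsym : ∀ x y : L, B x y = B y x) {a : L}
    (ha : 0 < B a a) (x : L) {r : L} (hr : B r r = -2) {C : ℤ} (hrC : |B a r| ≤ C) :
    |B x r| ≤ (B a x ^ 2 - B a a * B x x) * (2 * B a a + C ^ 2) + C * |B a x| := by
  have hE : 0 ≤ B a x ^ 2 - B a a * B x x := by linarith [hB.reduced_self_nonpos hsym ha x]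
  have hC : B a r ^ 2 ≤ C ^ 2 := by
    simpa only [sq_abs] using pow_le_pow_left₀ (abs_nonneg _) hrC 2
  have hcs : (B a a * B x r - B a x * B a r) ^ 2
      ≤ (B a x ^ 2 - B a a * B x x) * (2 * B a a + C ^ 2) := by
    refine (hB.sq_reduced_le hsym ha x r).trans ?_
    rw [hr]
    nlinarith [mul_le_mul_of_nonneg_left hC hE]
  calc |B x r| ≤ |B a a * B x r| := by
        rw [abs_mul, abs_of_pos ha]
        exact le_mul_of_one_le_left (abs_nonneg _) ha
    _ ≤ |B a a * B x r - B a x * B a r| + |B a x * B a r| :=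
        sub_le_iff_le_add.mp (abs_sub_abs_le_abs_sub _ _)
    _ ≤ (B a a * B x r - B a x * B a r) ^ 2 + C * |B a x| := by
        gcongr
        · rw [← Int.natCast_natAbs]
          exact Int.natAbs_le_self_sq _
        · rw [abs_mul, mul_comm]
          exact mul_le_mul_of_nonneg_right hrC (abs_nonneg _)
    _ ≤ _ := by gcongr

lemma finite_roots_of_abs_apply_le [Module.Free ℤ L] [Module.Finite ℤ L] (hB : IsLorentzian B)
    (hsym : ∀ x y : L, B x y = B y x) (hnondeg : ∀ x : L, (∀ y : L, B x y = 0) → x = 0)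
    {a : L} (ha : 0 < B a a) (C : ℤ) : {r : L | B r r = -2 ∧ |B a r| ≤ C}.Finite := by
  let b := Module.Free.chooseBasis ℤ L
  let K i := (B a (b i) ^ 2 - B a a * B (b i) (b i)) * (2 * B a a + C ^ 2) + C * |B a (b i)|
  have hinj : Function.Injective fun (x : L) i => B (b i) x := by
    intro x y hxy
    rw [← sub_eq_zero]
    refine hnondeg _ fun z => ?_
    have : B (x - y) = 0 := b.ext fun i => by
      simpa [hsym _ (b i), sub_eq_zero] using congrFun hxy i
    simp [this]
  refine ((Set.Finite.pi' fun i => Set.finite_Icc (-K i) (K i)).preimage hinj.injOn).subset ?_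
  rintro r ⟨hr, hrC⟩ i
  exact abs_le.mp (hB.abs_apply_le_of_root hsym ha (b i) hr hrC)

end IsLorentzian

end LorentzianForms

lemma IsPrimitiveVec.map {M N : Type*} [AddCommGroup M] [AddCommGroup N] {v : M}
    (hv : IsPrimitiveVec v) (g : M ≃+ N) : IsPrimitiveVec (g v) :=
  fun m u h => hv m (g.symm u) (by rw [← map_zsmul, ← h, g.symm_apply_apply])

section ChamberAutomorphisms

variable {L : Type*} [AddCommGroup L] [Module ℤ L] {B : L →ₗ[ℤ] L →ₗ[ℤ] ℤ} {x₀ : L}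
  {g : L ≃ₗ[ℤ] L}

lemma IsIsometry.symm (hg : IsIsometry B g) : IsIsometry B g.symm := fun x y => by
  simpa using (hg (g.symm x) (g.symm y)).symm

lemma IsIsometry.apply_eq_apply_symm (hg : IsIsometry B g) (x y : L) :
    B (g x) y = B x (g.symm y) := by
  simpa using hg x (g.symm y)

lemma symm_mem_posRoots (hgR : g '' PosRoots B x₀ = PosRoots B x₀) {r : L}
    (hr : r ∈ PosRoots B x₀) : g.symm r ∈ PosRoots B x₀ := by
  obtain ⟨s, hs, rfl⟩ := hgR.symm ▸ hr
  simpa using hs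

-- `g` maps `𝒟_L` onto itself: besides permuting the positive roots it must not swap the
-- two halves of the positive cone.
def PreservesChamber (B : L →ₗ[ℤ] L →ₗ[ℤ] ℤ) (x₀ : L) (g : L ≃ₗ[ℤ] L) : Prop :=
  IsIsometry B g ∧ g '' PosRoots B x₀ = PosRoots B x₀ ∧ 0 < B x₀ (g x₀)

namespace PreservesChamber

lemma symm (hsym : ∀ x y : L, B x y = B y x) (hg : PreservesChamber B x₀ g) :
    PreservesChamber B x₀ g.symm := by
  obtain ⟨hiso, hgR, hgx₀⟩ := hg
  refine ⟨hiso.symm, ?_, ?_⟩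
  · rw [g.image_symm_eq_preimage]
    conv_lhs => rw [← hgR]
    exact Set.preimage_image_eq _ g.injective
  · rwa [← hiso.apply_eq_apply_symm, hsym]

lemma map_mem_posRoots (hg : PreservesChamber B x₀ g) {r : L} (hr : r ∈ PosRoots B x₀) :
    g r ∈ PosRoots B x₀ :=
  hg.2.1 ▸ Set.mem_image_of_mem g hr

lemma isFund_map (hB : IsLorentzian B) (hsym : ∀ x y : L, B x y = B y x) (hx₀ : 0 < B x₀ x₀)
    (hg : PreservesChamber B x₀ g) {v : L} (hv : IsFund B x₀ v) : IsFund B x₀ (g v) := by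
  obtain ⟨hvv, hvx₀, hvR⟩ := hv
  refine ⟨by rwa [hg.1], ?_, fun r hr => ?_⟩
  · -- `g v` and `x₀` both lie in the cone of `g x₀`
    refine hB.apply_nonneg_of_cone hsym (a := g x₀) (by rwa [hg.1]) (by rwa [hg.1]) hx₀.le
      (by rwa [hg.1, hsym]) ?_
    rw [hsym]
    exact hg.2.2.le
  · rw [hg.1.apply_eq_apply_symm]
    exact hvR _ (symm_mem_posRoots hg.2.1 hr)

lemma isPosVec_map (hB : IsLorentzian B) (hsym : ∀ x y : L, B x y = B y x) (hx₀ : 0 < B x₀ x₀)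
    (hg : PreservesChamber B x₀ g) {v : L} (hv : IsPosVec B x₀ v) : IsPosVec B x₀ (g v) :=
  ⟨g.map_ne_zero_iff.mpr hv.1, fun u hu => by
    rw [hg.1.apply_eq_apply_symm]
    exact hv.2 _ ((hg.symm hsym).isFund_map hB hsym hx₀ hu)⟩

lemma isSimpleRoot_map (hB : IsLorentzian B) (hsym : ∀ x y : L, B x y = B y x)
    (hx₀ : 0 < B x₀ x₀) (hg : PreservesChamber B x₀ g) {r : L} (hr : IsSimpleRoot B x₀ r) :
    IsSimpleRoot B x₀ (g r) := by
  refine ⟨hg.map_mem_posRoots hr.1, fun r' hr' hne hpos => ?_⟩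
  have := (hg.symm hsym).isPosVec_map hB hsym hx₀ hpos
  rw [map_sub, g.symm_apply_apply] at this
  exact hr.2 _ (symm_mem_posRoots hg.2.1 hr') (fun h => hne (by rw [← h, g.apply_symm_apply]))
    this

end PreservesChamber

lemma preservesChamber_of_infinite [Module.Free ℤ L] [Module.Finite ℤ L] (hB : IsLorentzian B)
    (hsym : ∀ x y : L, B x y = B y x) (hnondeg : ∀ x : L, (∀ y : L, B x y = 0) → x = 0)
    (hx₀ : 0 < B x₀ x₀) (hg : IsIsometry B g) (hgR : g '' PosRoots B x₀ = PosRoots B x₀)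
    (hinf : (PosRoots B x₀).Infinite) : PreservesChamber B x₀ g := by
  refine ⟨hg, hgR, ?_⟩
  have hgx₀ : 0 < B (g x₀) (g x₀) := by rwa [hg]
  have hne : B x₀ (g x₀) ≠ 0 := fun h =>
    (hB _ _ hx₀ h fun h0 => by simp [h0] at hgx₀).not_gt hgx₀
  refine hne.lt_or_gt.resolve_left fun hneg => hinf ?_
  -- otherwise every positive root separates `x₀` from `-g x₀`
  refine (hB.finite_roots_of_abs_apply_le hsym hnondeg hx₀ (2 * B x₀ (-g x₀))).subset
    fun r hr => ⟨hr.1, ?_⟩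
  rw [abs_of_pos hr.2]
  refine hB.apply_le_of_separates hsym hx₀ (by simpa using hgx₀) (by simp; linarith) hr.1 hr.2.le ?_
  simpa [hg.apply_eq_apply_symm] using (symm_mem_posRoots hgR hr).2.le

end ChamberAutomorphisms

theorem stmt9_general (L : Type*) [AddCommGroup L] [Module ℤ L]
    [Module.Free ℤ L] [Module.Finite ℤ L]
    (B : L →ₗ[ℤ] L →ₗ[ℤ] ℤ)
    (hsym : ∀ x y : L, B x y = B y x)
    (hnondeg : ∀ x : L, (∀ y : L, B x y = 0) → x = 0)
    (hhyp : ∃ v : L, 0 < B v v ∧ ∀ x : L, B v x = 0 → x ≠ 0 → B x x < 0)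
    (x₀ : L) (hx₀ : GenericPoint B x₀)
    (e : L) (he : IsChamberCusp B x₀ e)
    (hinf : {r : L | IsSimpleRoot B x₀ r}.Infinite)
    (N : ℤ) (hbound : ∀ r : L, IsSimpleRoot B x₀ r → B e r ≤ N) :
    ∀ g : L ≃ₗ[ℤ] L, IsIsometry B g → ⇑g '' PosRoots B x₀ = PosRoots B x₀ →
      g e = e := by
  intro g hg hgR
  have hB := isLorentzian_of_exists hsym hhyp
  obtain ⟨hee, heprim, hefund⟩ := he
  have hx₀ := hx₀.1
  have hgC := preservesChamber_of_infinite hB hsym hnondeg hx₀ hg hgR (hinf.mono fun r hr => hr.1)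
  have hgefund := hgC.isFund_map hB hsym hx₀ hefund
  have hgee : B (g e) (g e) = 0 := by rw [hg, hee]
  have hx₀e : 0 < B x₀ e :=
    hB.apply_pos_of_cone hx₀ hee.ge (hsym e x₀ ▸ hefund.2.1) heprim.ne_zero
  have hx₀ge : 0 < B x₀ (g e) :=
    hB.apply_pos_of_cone hx₀ hgee.ge (hsym _ x₀ ▸ hgefund.2.1) (heprim.map g.toAddEquiv).ne_zero
  rcases (hB.apply_nonneg_of_cone hsym hx₀ hee.ge hgee.ge hx₀e.le hx₀ge.le).eq_or_lt with h0 | hpos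
  · have := IsAddTorsionFree.of_isTorsionFree ℤ L
    exact (heprim.eq_of_smul_eq_smul (heprim.map g.toAddEquiv) hx₀ge hx₀e
      (hB.smul_eq_smul_of_apply_eq_zero hsym hx₀ hee.ge hgee.ge h0.symm)).symm
  · -- `e + g e` has positive square and pairs with every simple root between `0` and `2 N`
    refine absurd ((hB.finite_roots_of_abs_apply_le hsym hnondeg (a := e + g e) ?_ (2 * N)).subset
      fun r hr => ⟨hr.1.1, ?_⟩) hinf
    · simp only [map_add, LinearMap.add_apply, hee, hgee, hsym (g e) e]
      linarith
    · have hgr : B (g e) r ≤ N := by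
        rw [hg.apply_eq_apply_symm]
        exact hbound _ ((hgC.symm hsym).isSimpleRoot_map hB hsym hx₀ hr)
      have := hefund.2.2 r hr.1
      have := hgefund.2.2 r hr.1
      rw [map_add, LinearMap.add_apply, abs_le]
      constructor <;> linarith [hbound r hr]

/-- if an even hyperbolic lattice `L` has infinitely many simple
`(−2)`-roots and there is a cusp `e` of `𝒟_L` with `e.r ≤ N` for all simple
`(−2)`-roots `r`, then every symmetry `g ∈ Aut(𝒟_L)` fixes `e`. -/
theorem stmt9 (L : Type*) [AddCommGroup L] [Module ℤ L]
    [Module.Free ℤ L] [Module.Finite ℤ L]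
    (B : L →ₗ[ℤ] L →ₗ[ℤ] ℤ)
    (hsym : ∀ x y : L, B x y = B y x)
    (heven : ∀ x : L, ∃ c : ℤ, B x x = 2 * c)
    (hnondeg : ∀ x : L, (∀ y : L, B x y = 0) → x = 0)
    (hhyp : ∃ v : L, 0 < B v v ∧ ∀ x : L, B v x = 0 → x ≠ 0 → B x x < 0)
    (x₀ : L) (hx₀ : GenericPoint B x₀)
    (e : L) (he : IsChamberCusp B x₀ e)
    (hinf : {r : L | IsSimpleRoot B x₀ r}.Infinite)
    (N : ℤ) (hbound : ∀ r : L, IsSimpleRoot B x₀ r → B e r ≤ N) :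
    ∀ g : L ≃ₗ[ℤ] L, IsIsometry B g → ⇑g '' PosRoots B x₀ = PosRoots B x₀ →
      g e = e :=
  stmt9_general L B hsym hnondeg hhyp x₀ hx₀ e he hinf N hbound
end

section
/- Let W be a negative definite even lattice that is not a root overlattice and such that W(−1) has covering radius at most √2. Then in the hyperbolic lattice L = U ⊕ W with U generated by e, f with e² = 0, f² = −2, e.f = 1, every positive (−2)-root r of L with e.r ≥ 2 is not simple: there exists a positive (−2)-root r' with e.r' = 1 and r.r' < 0. -/
/-!
Write `r = xe + yf + z` with `z ∈ W` and `y = e.r ≥ 2`, and let `z' ∈ W` be a lattice point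
within `√2` of `z / y`. Then `r' = x'e + f + z'` with `x' = −z'²/2` is a `(−2)`-root with
`e.r' = 1`, positive because `e` is fundamental, and `2y · r.r' = −2 − 2y² − (z − yz')² ≤ −2`.
So `s = r − r'` has `s² = −4 − 2 r.r' ≥ −2` and `e.s = y − 1 > 0`. Either `s` is a `(−2)`-root,
positive since `e.s > 0`, or `s² ≥ 0` and `s` lies in the closed positive cone; in both cases `s`
pairs nonnegatively with every fundamental vector, so `r` is not simple. The cone step is the
reverse Cauchy–Schwarz inequality, which holds because `e^⊥ = ℤe ⊕ W` is negative semidefinite.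
-/

section ChamberMachinery

variable {L : Type*} [AddCommGroup L] [Module ℤ L]

/-- A cusp of the fundamental domain: a primitive isotropic vector in `L ∩ 𝒟_L`. -/
def IsLatticeCusp (B : L →ₗ[ℤ] L →ₗ[ℤ] ℤ) (x₀ : L) (e : L) : Prop :=
  B e e = 0 ∧ IsPrimitiveVec e ∧ IsFund B x₀ e

end ChamberMachinery

section LorentzianLattice

variable {L : Type*} [AddCommGroup L] [Module ℤ L] {B : L →ₗ[ℤ] L →ₗ[ℤ] ℤ}

theorem reverse_cauchy_schwarz_of_perp_nonpos (hsym : ∀ x y : L, B x y = B y x) {e : L}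
    (hperp : ∀ x, B e x = 0 → B x x ≤ 0) (v w : L) :
    B e w ^ 2 * B v v - 2 * (B e v * B e w * B v w) + B e v ^ 2 * B w w ≤ 0 := by
  have h := hperp (B e w • v - B e v • w) (by simp; ring)
  simp only [map_sub, map_zsmul, LinearMap.sub_apply, LinearMap.smul_apply, smul_eq_mul,
    hsym w v] at h
  linarith

theorem apply_nonneg_of_mem_cone (hsym : ∀ x y : L, B x y = B y x) {e : L}
    (hperp : ∀ x, B e x = 0 → B x x ≤ 0) {v w : L} (hv : 0 ≤ B v v) (hw : 0 ≤ B w w)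
    (hev : 0 < B e v) (hew : 0 < B e w) : 0 ≤ B v w := by
  have h := reverse_cauchy_schwarz_of_perp_nonpos hsym hperp v w
  have : 0 < 2 * (B e v * B e w) := by positivity
  nlinarith [mul_nonneg (sq_nonneg (B e w)) hv, mul_nonneg (sq_nonneg (B e v)) hw]

structure IsHyperbolicSplitting (B : L →ₗ[ℤ] L →ₗ[ℤ] ℤ) (e f : L) (W : Submodule ℤ L) :
    Prop where
  symm : ∀ x y : L, B x y = B y x
  apply_e_e : B e e = 0
  apply_f_f : B f f = -2
  apply_e_f : B e f = 1
  apply_e_of_mem : ∀ u ∈ W, B e u = 0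
  apply_f_of_mem : ∀ u ∈ W, B f u = 0
  exists_eq : ∀ v : L, ∃ (a b : ℤ) (u : L), u ∈ W ∧ v = a • e + b • f + u

namespace IsHyperbolicSplitting

variable {e f : L} {W : Submodule ℤ L}

theorem apply_eq (hL : IsHyperbolicSplitting B e f W) (a b c d : ℤ) {w v : L} (hw : w ∈ W)
    (hv : v ∈ W) :
    B (a • e + b • f + w) (c • e + d • f + v) = a * d + b * c - 2 * (b * d) + B w v := by
  simp only [map_add, map_zsmul, LinearMap.add_apply, LinearMap.smul_apply, smul_eq_mul,
    hL.apply_e_e, hL.apply_f_f, hL.apply_e_f, hL.symm f e, hL.symm w e, hL.symm w f,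
    hL.apply_e_of_mem v hv, hL.apply_f_of_mem v hv, hL.apply_e_of_mem w hw,
    hL.apply_f_of_mem w hw]
  ring

theorem apply_e_eq (hL : IsHyperbolicSplitting B e f W) (a b : ℤ) {w : L} (hw : w ∈ W) :
    B e (a • e + b • f + w) = b := by
  simp [hL.apply_e_e, hL.apply_e_f, hL.apply_e_of_mem w hw]

theorem apply_self_nonpos_of_perp (hL : IsHyperbolicSplitting B e f W)
    (hW : ∀ u ∈ W, B u u ≤ 0) {x : L} (hx : B e x = 0) : B x x ≤ 0 := by
  obtain ⟨a, b, u, hu, rfl⟩ := hL.exists_eq x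
  obtain rfl : b = 0 := (hL.apply_e_eq a b hu).symm.trans hx
  rw [hL.apply_eq a 0 a 0 hu hu]
  linarith [hW u hu]

theorem exists_root_apply_neg (hL : IsHyperbolicSplitting B e f W)
    (heven : ∀ x : L, ∃ c : ℤ, B x x = 2 * c)
    (hcov : ∀ u ∈ W, ∀ y : ℤ, 0 < y → ∃ u' ∈ W, -(B (u - y • u') (u - y • u')) ≤ 2 * y ^ 2)
    {r : L} (hr : B r r = -2) (her : 0 < B e r) :
    ∃ r' : L, B r' r' = -2 ∧ B e r' = 1 ∧ B r r' < 0 := by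
  obtain ⟨a, b, z, hz, rfl⟩ := hL.exists_eq r
  rw [hL.apply_e_eq a b hz] at her
  rw [hL.apply_eq a b a b hz hz] at hr
  obtain ⟨z', hz', hzz'⟩ := hcov z hz b her
  obtain ⟨c, hc⟩ := heven z'
  have hdist : B (z - b • z') (z - b • z') = B z z - 2 * b * B z z' + b ^ 2 * B z' z' := by
    simp only [map_sub, map_zsmul, LinearMap.sub_apply, LinearMap.smul_apply, smul_eq_mul,
      hL.symm z' z]
    ring
  refine ⟨(-c) • e + (1 : ℤ) • f + z', ?_, hL.apply_e_eq _ _ hz', ?_⟩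
  · rw [hL.apply_eq _ _ _ _ hz' hz', hc]
    ring
  · rw [hL.apply_eq _ _ _ _ hz hz']
    -- `2b · r.r' = −2 − 2b² − (z − b z')²` is at most `−2` by the choice of `z'`
    nlinarith

end IsHyperbolicSplitting

theorem mem_posRoots_of_apply_pos {x₀ e r : L} (hx₀ : GenericPoint B x₀) (he : IsFund B x₀ e)
    (hr : B r r = -2) (her : 0 < B e r) : r ∈ PosRoots B x₀ := by
  refine ⟨hr, (hx₀.2 r hr).lt_or_gt.resolve_left fun hneg => ?_⟩
  have h := he.2.2 (-r) ⟨by simpa using hr, by simpa using hneg⟩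
  rw [map_neg] at h
  omega

theorem apply_pos_of_isFund {x₀ e : L} (hperp : ∀ x, B e x = 0 → B x x ≤ 0)
    (hx₀ : GenericPoint B x₀) (he : IsFund B x₀ e) : 0 < B e x₀ :=
  he.2.1.lt_of_ne fun h => (hperp x₀ h.symm).not_gt hx₀.1

theorem apply_nonneg_of_isFund (hsym : ∀ x y : L, B x y = B y x) {x₀ e : L}
    (hperp : ∀ x, B e x = 0 → B x x ≤ 0) (hx₀ : GenericPoint B x₀) (he : IsFund B x₀ e)
    {u s : L} (hu : IsFund B x₀ u) (hs : 0 ≤ B s s) (hes : 0 < B e s) : 0 ≤ B u s := by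
  have hex₀ := apply_pos_of_isFund hperp hx₀ he
  have heu : 0 ≤ B e u := by
    by_contra! h
    have := reverse_cauchy_schwarz_of_perp_nonpos hsym hperp u x₀
    nlinarith [mul_nonneg (sq_nonneg (B e x₀)) hu.1, mul_pos (pow_pos (neg_pos.2 h) 2) hx₀.1,
      mul_nonneg (mul_nonneg (neg_nonneg.2 h.le) hex₀.le) hu.2.1]
  -- `n • u + x₀` lies in the positive cone for every `n ≥ 0`; let `n → ∞`
  have hshift : ∀ n : ℤ, 0 ≤ n → 0 ≤ n * B u s + B x₀ s := by
    intro n hn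
    have h := apply_nonneg_of_mem_cone hsym hperp (v := n • u + x₀) (w := s) ?_ hs ?_ hes
    · simpa using h
    · simp only [map_add, map_zsmul, LinearMap.add_apply, LinearMap.smul_apply, smul_eq_mul,
        hsym x₀ u]
      nlinarith [mul_nonneg (mul_nonneg hn hn) hu.1, mul_nonneg hn hu.2.1, hx₀.1]
    · simp only [map_add, map_zsmul, smul_eq_mul]
      nlinarith [mul_nonneg hn heu]
  have hx₀s : 0 ≤ B x₀ s := by simpa using hshift 0 le_rfl
  by_contra! h
  nlinarith [hshift (B x₀ s + 1) (by omega)]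

theorem isPosVec_of_apply_pos (hsym : ∀ x y : L, B x y = B y x)
    (heven : ∀ x : L, ∃ c : ℤ, B x x = 2 * c) {x₀ e : L} (hperp : ∀ x, B e x = 0 → B x x ≤ 0)
    (hx₀ : GenericPoint B x₀) (he : IsFund B x₀ e) {s : L} (hs : -2 ≤ B s s)
    (hes : 0 < B e s) : IsPosVec B x₀ s := by
  refine ⟨fun h => by simp [h] at hes, fun u hu => ?_⟩
  rw [hsym]
  obtain ⟨c, hc⟩ := heven s
  rcases (show c = -1 ∨ 0 ≤ c by omega) with rfl | hc
  · exact hu.2.2 s (mem_posRoots_of_apply_pos hx₀ he (by omega) hes)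
  · exact apply_nonneg_of_isFund hsym hperp hx₀ he hu (by omega) hes

end LorentzianLattice

theorem stmt10_general (L : Type*) [AddCommGroup L] [Module ℤ L]
    (B : L →ₗ[ℤ] L →ₗ[ℤ] ℤ)
    (hsym : ∀ x y : L, B x y = B y x)
    (heven : ∀ x : L, ∃ c : ℤ, B x x = 2 * c)
    (e f : L) (W₀ : Submodule ℤ L)
    (hee : B e e = 0) (hff : B f f = -2) (hef : B e f = 1)
    (heW : ∀ u ∈ W₀, B e u = 0) (hfW : ∀ u ∈ W₀, B f u = 0)
    -- L = U ⊕ W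
    (hspan : ∀ v : L, ∃ (a b : ℤ) (u : L), u ∈ W₀ ∧ v = a • e + b • f + u)
    -- W is negative definite
    (hWneg : ∀ u ∈ W₀, u ≠ 0 → B u u < 0)
    -- W(−1) has covering radius at most √2
    (hcov : ∀ u ∈ W₀, ∀ yy : ℤ, 0 < yy →
      ∃ u' ∈ W₀, -(B (u - yy • u') (u - yy • u')) ≤ 2 * yy ^ 2)
    (x₀ : L) (hx₀ : GenericPoint B x₀)
    -- e is a fundamental (in fact, cusp) vector of 𝒟_L
    (hefund : IsFund B x₀ e) :
    ∀ r : L, r ∈ PosRoots B x₀ → 2 ≤ B e r →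
      ¬ IsSimpleRoot B x₀ r ∧
      ∃ r' ∈ PosRoots B x₀, B e r' = 1 ∧ B r r' < 0 := by
  have hL : IsHyperbolicSplitting B e f W₀ := ⟨hsym, hee, hff, hef, heW, hfW, hspan⟩
  have hW : ∀ u ∈ W₀, B u u ≤ 0 := fun u hu =>
    (eq_or_ne u 0).elim (fun h => by simp [h]) fun h => (hWneg u hu h).le
  have hperp : ∀ x, B e x = 0 → B x x ≤ 0 := fun x => hL.apply_self_nonpos_of_perp hW
  intro r hr her
  obtain ⟨r', hr'r', her', hrr'⟩ := hL.exists_root_apply_neg heven hcov hr.1 (by omega)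
  have hr' : r' ∈ PosRoots B x₀ := mem_posRoots_of_apply_pos hx₀ hefund hr'r' (by omega)
  refine ⟨fun hsimple => hsimple.2 r' hr' (fun h => by rw [h] at her'; omega) ?_,
    r', hr', her', hrr'⟩
  apply isPosVec_of_apply_pos hsym heven hperp hx₀ hefund
  · simp only [map_sub, LinearMap.sub_apply, hr.1, hr'r', hsym r' r]
    omega
  · rw [map_sub, her']
    omega

/-- Proposition 4.4: let `W` be an even negative definite lattice that
is not a root overlattice and such that `W(−1)` has covering radius at most `√2`
(equivalently: every point `z/y` with `z ∈ W`, `y ≥ 1`, is within distance `√2` of a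
lattice point).  In `L = U ⊕ W`, with the basis `e, f` of `U` satisfying `e² = 0`,
`f² = −2`, `e.f = 1` and `e` lying in the fundamental domain `𝒟_L`, every positive
`(−2)`-root `r` with `e.r ≥ 2` is not simple: there is a positive `(−2)`-root `r'`
with `e.r' = 1` and `r.r' < 0`. -/
theorem stmt10 (L : Type*) [AddCommGroup L] [Module ℤ L]
    [Module.Free ℤ L] [Module.Finite ℤ L]
    (B : L →ₗ[ℤ] L →ₗ[ℤ] ℤ)
    (hsym : ∀ x y : L, B x y = B y x)
    (heven : ∀ x : L, ∃ c : ℤ, B x x = 2 * c)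
    (hnondeg : ∀ x : L, (∀ y : L, B x y = 0) → x = 0)
    (e f : L) (W₀ : Submodule ℤ L)
    (hee : B e e = 0) (hff : B f f = -2) (hef : B e f = 1)
    (heW : ∀ u ∈ W₀, B e u = 0) (hfW : ∀ u ∈ W₀, B f u = 0)
    -- L = U ⊕ W
    (hspan : ∀ v : L, ∃ (a b : ℤ) (u : L), u ∈ W₀ ∧ v = a • e + b • f + u)
    -- W is negative definite
    (hWneg : ∀ u ∈ W₀, u ≠ 0 → B u u < 0)
    -- W is not a root overlattice
    (hWnotroot :
      Module.finrank ℤ ↥(Submodule.span ℤ {u : L | u ∈ W₀ ∧ B u u = -2})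
        < Module.finrank ℤ ↥W₀)
    -- W(−1) has covering radius at most √2
    (hcov : ∀ u ∈ W₀, ∀ yy : ℤ, 0 < yy →
      ∃ u' ∈ W₀, -(B (u - yy • u') (u - yy • u')) ≤ 2 * yy ^ 2)
    (x₀ : L) (hx₀ : GenericPoint B x₀)
    -- e is a fundamental (in fact, cusp) vector of 𝒟_L
    (hefund : IsFund B x₀ e) :
    ∀ r : L, r ∈ PosRoots B x₀ → 2 ≤ B e r →
      ¬ IsSimpleRoot B x₀ r ∧
      ∃ r' ∈ PosRoots B x₀, B e r' = 1 ∧ B r r' < 0 :=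
  stmt10_general L B hsym heven e f W₀ hee hff hef heW hfW hspan hWneg hcov x₀ hx₀ hefund
end

section
/- Let W be a negative definite even lattice with W(−1) of covering radius ≤ √2, let y ≥ 2 be an integer, and z ∈ W. Choose z' ∈ W with −(z/y − z')² ≤ 2 (possible by the covering radius hypothesis), and set x' = −z'²/2. Then in L = U ⊕ W with standard basis e, f of U (e² = 0, f² = −2, e.f = 1), the vector r' = x'e + f + z' satisfies r'² = −2, e.r' = 1, and for any vector r = xe + yf + z with r² = −2 one has r.r' < 0. -/
/-- in `L = U ⊕ W` with `U` spanned by `e, f` (`e² = 0`, `f² = −2`,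
`e.f = 1`) and `W` even negative definite, let `y ≥ 2`, `z ∈ W`, and choose `z' ∈ W`
with `−(z/y − z')² ≤ 2` (i.e. `−(z − y z')² ≤ 2y²`), and set `x' = −z'²/2`.  Then
`r' = x'e + f + z'` satisfies `r'² = −2`, `e.r' = 1`, and `r.r' < 0` for every vector
`r = xe + yf + z` with `r² = −2`. -/
theorem stmt11 (L : Type*) [AddCommGroup L] [Module ℤ L]
    [Module.Free ℤ L] [Module.Finite ℤ L]
    (B : L →ₗ[ℤ] L →ₗ[ℤ] ℤ)
    (hsym : ∀ x y : L, B x y = B y x)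
    (e f : L) (W₀ : Submodule ℤ L)
    (hee : B e e = 0) (hff : B f f = -2) (hef : B e f = 1)
    (heW : ∀ u ∈ W₀, B e u = 0) (hfW : ∀ u ∈ W₀, B f u = 0)
    (heven : ∀ u ∈ W₀, ∃ c : ℤ, B u u = 2 * c)
    (hWneg : ∀ u ∈ W₀, u ≠ 0 → B u u < 0)
    (y : ℤ) (hy : 2 ≤ y)
    (z z' : L) (hz : z ∈ W₀) (hz' : z' ∈ W₀)
    (hcov : -(B (z - y • z') (z - y • z')) ≤ 2 * y ^ 2)
    (x' : ℤ) (hx' : B z' z' = -(2 * x')) :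
    B (x' • e + f + z') (x' • e + f + z') = -2 ∧
    B e (x' • e + f + z') = 1 ∧
    ∀ x : ℤ, B (x • e + y • f + z) (x • e + y • f + z) = -2 →
      B (x • e + y • f + z) (x' • e + f + z') < 0 := by

  have hez : B e z = 0 := heW z hz
  have hez' : B e z' = 0 := heW z' hz'
  have hfz : B f z = 0 := hfW z hz
  have hfz' : B f z' = 0 := hfW z' hz'
  have hze : B z e = 0 := by rw [hsym]; exact hez
  have hz'e : B z' e = 0 := by rw [hsym]; exact hez'
  have hzf : B z f = 0 := by rw [hsym]; exact hfz
  have hz'f : B z' f = 0 := by rw [hsym]; exact hfz'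
  have hfe : B f e = 1 := by rw [hsym]; exact hef
  have hzz' : B z z' = B z' z := hsym z z'
  simp only [map_add, map_smul, LinearMap.map_smul_of_tower, LinearMap.add_apply, LinearMap.smul_apply, map_sub,
    LinearMap.sub_apply, smul_eq_mul, hee, hff, hef, hez, hez', hfz, hfz', hze, hz'e,
    hzf, hz'f, hfe, hx'] at hcov ⊢
  refine ⟨by ring, by ring, fun x hr => ?_⟩
  have hy0 : 0 < y := by linarith
  rw [hzz'] at hcov ⊢
  nlinarith [hcov, hr, hy0, mul_le_mul_of_nonneg_left hcov (by linarith : (0:ℤ) ≤ y)]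
end
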